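/- Let $3/2 \leq \alpha_1 \leq 2$ and $0 < \alpha_2 < \alpha_1$ with $2 - 1/\alpha_1 - 2/\alpha_2 \leq 0$. Then $\int_2^{\infty}\int_1^{y}\int_1^{y} \left(x^{\alpha_1} + y^{\alpha_2} + z^{\alpha_2}\ln^{\alpha_2} y\right)^{-2}\, dx\, dz\, dy = \infty$. -/

import Mathlib

/-!
On the box `1 ≤ x ≤ y ^ (α₂ / α₁)`, `1 ≤ z ≤ y / log y` all three terms of the denominator are at
most `y ^ α₂`, so the inner double integral is at least
`y ^ (α₂ / α₁) · (y / log y) / (9 y ^ (2 α₂))` up to constants. The hypothesis on the exponents is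
exactly `2 α₂ ≤ α₂ / α₁ + 2`, which makes this at least a multiple of `1 / (y log y)`, and
`∫^∞ dy / (y log y) = ∞` because `log ∘ log` is an antiderivative.
-/

open Set MeasureTheory Real Filter Asymptotics
open scoped ENNReal

lemma not_integrableOn_Ici_inv_div_log (a : ℝ) :
    ¬ IntegrableOn (fun x : ℝ ↦ x⁻¹ / log x) (Ici a) := by
  have hderiv : ∀ᶠ x in atTop, DifferentiableAt ℝ (fun x ↦ log (log x)) x := by
    filter_upwards [eventually_gt_atTop 1] with x hx
    exact differentiableAt_log_log (by linarith) hx.ne' (by linarith)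
  have hnorm : Tendsto (fun x ↦ ‖log (log x)‖) atTop atTop :=
    tendsto_norm_atTop_atTop.comp (tendsto_log_atTop.comp tendsto_log_atTop)
  refine not_integrableOn_of_tendsto_norm_atTop_of_deriv_isBigO_filter atTop (Ici_mem_atTop a)
    hderiv hnorm ?_
  rw [deriv_log_log]
  exact isBigO_refl _ _

lemma lintegral_Ici_inv_div_log_eq_top (a : ℝ) :
    ∫⁻ x in Ici a, ENNReal.ofReal (x⁻¹ / log x) = ∞ := by
  refine eq_top_mono (lintegral_mono_set (Ici_subset_Ici.2 (le_max_left a 1))) ?_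
  by_contra hfin
  refine not_integrableOn_Ici_inv_div_log (max a 1)
    ((lintegral_ofReal_ne_top_iff_integrable ?_ ?_).1 hfin)
  · exact (by fun_prop : Measurable fun x : ℝ ↦ x⁻¹ / log x).aestronglyMeasurable
  · filter_upwards [ae_restrict_mem measurableSet_Ici] with x hx
    have hx1 : 1 ≤ x := le_of_max_le_right hx
    exact div_nonneg (inv_nonneg.2 (by linarith)) (log_nonneg hx1)

lemma setLIntegral_Ici_eq_top_of_eventually_le {f g : ℝ → ℝ≥0∞} {c : ℝ≥0∞} (hc : c ≠ 0)
    (hg : ∀ b, ∫⁻ y in Ici b, g y = ∞) (hfg : ∀ᶠ y in atTop, c * g y ≤ f y) (a : ℝ) :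
    ∫⁻ y in Ici a, f y = ∞ := by
  obtain ⟨K, hK⟩ := hfg.exists_forall_of_atTop
  refine eq_top_mono ?_ (ENNReal.mul_top hc)
  calc c * ∞ = c * ∫⁻ y in Ici (max a K), g y := by rw [hg]
    _ ≤ ∫⁻ y in Ici (max a K), c * g y := lintegral_const_mul_le _ _
    _ ≤ ∫⁻ y in Ici (max a K), f y :=
        setLIntegral_mono' measurableSet_Ici fun y hy ↦ hK y (le_of_max_le_right hy)
    _ ≤ ∫⁻ y in Ici a, f y := lintegral_mono_set (Ici_subset_Ici.2 (le_max_left a K))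

lemma ofReal_mul_le_lintegral_Icc_Icc {f : ℝ → ℝ → ℝ} {a b c l y : ℝ} (hc : 0 ≤ c)
    (hla : l ≤ a) (hay : a ≤ y) (hby : b ≤ y) (hf : ∀ z ∈ Icc l b, ∀ x ∈ Icc l a, c ≤ f z x) :
    ENNReal.ofReal (c * (a - l) * (b - l)) ≤
      ∫⁻ z in Icc l y, ∫⁻ x in Icc l y, ENNReal.ofReal (f z x) := by
  rw [ENNReal.ofReal_mul (mul_nonneg hc (sub_nonneg.2 hla)), ENNReal.ofReal_mul hc,
    ← Real.volume_Icc, ← Real.volume_Icc]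
  calc ENNReal.ofReal c * volume (Icc l a) * volume (Icc l b)
      = ∫⁻ z in Icc l b, ∫⁻ x in Icc l a, ENNReal.ofReal c := by
        simp only [setLIntegral_const]
    _ ≤ ∫⁻ z in Icc l b, ∫⁻ x in Icc l a, ENNReal.ofReal (f z x) :=
        setLIntegral_mono' measurableSet_Icc fun z hz ↦
          setLIntegral_mono' measurableSet_Icc fun x hx ↦ ENNReal.ofReal_le_ofReal (hf z hz x hx)
    _ ≤ ∫⁻ z in Icc l b, ∫⁻ x in Icc l y, ENNReal.ofReal (f z x) :=
        lintegral_mono fun z ↦ lintegral_mono_set (Icc_subset_Icc_right hay)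
    _ ≤ _ := lintegral_mono_set (Icc_subset_Icc_right hby)

lemma one_div_sq_three_mul_rpow_le {α₁ α₂ x y z L : ℝ} (hα₁ : 0 < α₁) (hα₂ : 0 ≤ α₂)
    (hy : 0 < y) (hL : 0 < L) (hx₀ : 0 ≤ x) (hx : x ≤ y ^ (α₂ / α₁)) (hz₀ : 0 ≤ z)
    (hz : z ≤ y / L) :
    1 / (3 * y ^ α₂) ^ 2 ≤ 1 / (x ^ α₁ + y ^ α₂ + z ^ α₂ * L ^ α₂) ^ 2 := by
  have hxy : x ^ α₁ ≤ y ^ α₂ :=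
    calc x ^ α₁ ≤ (y ^ (α₂ / α₁)) ^ α₁ := rpow_le_rpow hx₀ hx hα₁.le
      _ = y ^ α₂ := by rw [← rpow_mul hy.le, div_mul_cancel₀ _ hα₁.ne']
  have hzy : z ^ α₂ * L ^ α₂ ≤ y ^ α₂ := by
    rw [← mul_rpow hz₀ hL.le]
    exact rpow_le_rpow (by positivity) ((le_div_iff₀ hL).1 hz) hα₂
  have hpos : 0 < x ^ α₁ + y ^ α₂ + z ^ α₂ * L ^ α₂ := by positivity
  gcongr
  linarith

lemma two_mul_log_le_self {y : ℝ} (hy : 16 ≤ y) : 2 * log y ≤ y := by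
  have hsqrt : 4 ≤ √y := le_sqrt_of_sq_le (by linarith)
  have hlog : log y ≤ y ^ (1 / 2 : ℝ) / (1 / 2) := log_le_rpow_div (by linarith) (by norm_num)
  rw [← sqrt_eq_rpow] at hlog
  nlinarith [sq_sqrt (by linarith : 0 ≤ y)]

lemma inv_div_log_le_mul_sub_one {α r y : ℝ} (hr : 2 * α ≤ r + 2) (hy : 16 ≤ y)
    (hyr : 2 ≤ y ^ r) :
    1 / 36 * (y⁻¹ / log y) ≤ 1 / (3 * y ^ α) ^ 2 * (y ^ r - 1) * (y / log y - 1) := by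
  have hy₀ : 0 < y := by linarith
  have hL : 0 < log y := log_pos (by linarith)
  have hlog : 1 ≤ y / (2 * log y) := (one_le_div (by positivity)).2 (two_mul_log_le_self hy)
  have hpow : (y ^ α) ^ 2 ≤ y ^ r * y ^ 2 := by
    rw [← rpow_natCast, ← rpow_mul hy₀.le, ← rpow_natCast, ← rpow_add hy₀]
    exact rpow_le_rpow_of_exponent_le (by linarith) (by push_cast; linarith)
  calc 1 / 36 * (y⁻¹ / log y) = 1 / (9 * (y ^ r * y ^ 2)) * (y ^ r / 2) * (y / (2 * log y)) := by
        field_simp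
        norm_num
    _ ≤ 1 / (9 * (y ^ α) ^ 2) * (y ^ r / 2) * (y / (2 * log y)) := by gcongr
    _ ≤ 1 / (3 * y ^ α) ^ 2 * (y ^ r - 1) * (y / log y - 1) := by
        have hsplit : y / log y = 2 * (y / (2 * log y)) := by field_simp
        have hyr' : y ^ r / 2 ≤ y ^ r - 1 := by linarith
        have hz' : y / (2 * log y) ≤ y / log y - 1 := by linarith
        rw [show (3 * y ^ α) ^ 2 = 9 * (y ^ α) ^ 2 by ring]
        gcongr
        exact mul_nonneg (by positivity) (by linarith)

theorem stmt15_general (α₁ α₂ : ℝ) (h2 : 0 < α₂) (h21 : α₂ < α₁)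
    (hγ : 2 - 1 / α₁ - 2 / α₂ ≤ 0) :
    (∫⁻ y in Ici (2 : ℝ), ∫⁻ z in Icc (1 : ℝ) y, ∫⁻ x in Icc (1 : ℝ) y,
        ENNReal.ofReal (1 / (x ^ α₁ + y ^ α₂ + z ^ α₂ * Real.log y ^ α₂) ^ 2)) = ⊤ := by
  have hα₁ : 0 < α₁ := h2.trans h21
  have hr : 2 * α₂ ≤ α₂ / α₁ + 2 := by
    have hscaled : (2 - 1 / α₁ - 2 / α₂) * α₂ = 2 * α₂ - α₂ / α₁ - 2 := by field_simp
    linarith [mul_nonpos_of_nonpos_of_nonneg hγ h2.le]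
  refine setLIntegral_Ici_eq_top_of_eventually_le (c := ENNReal.ofReal (1 / 36))
    (by simp) lintegral_Ici_inv_div_log_eq_top ?_ 2
  filter_upwards [eventually_ge_atTop 16,
    (tendsto_rpow_atTop (div_pos h2 hα₁)).eventually_ge_atTop 2] with y hy hyr
  have hy₀ : 0 < y := by linarith
  have hL : 1 ≤ log y := (le_log_iff_exp_le hy₀).2 (by linarith [exp_one_lt_d9])
  rw [← ENNReal.ofReal_mul (by norm_num)]
  refine (ENNReal.ofReal_le_ofReal (inv_div_log_le_mul_sub_one hr hy hyr)).trans
    (ofReal_mul_le_lintegral_Icc_Icc (by positivity) (by linarith)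
      (rpow_le_self_of_one_le (by linarith) ((div_lt_one hα₁).2 h21).le)
      (div_le_self hy₀.le hL) fun z hz x hx ↦ ?_)
  exact one_div_sq_three_mul_rpow_le hα₁ h2.le hy₀ (by linarith) (by linarith [hx.1]) hx.2
    (by linarith [hz.1]) hz.2

theorem stmt15 (α₁ α₂ : ℝ) (h1 : 3 / 2 ≤ α₁) (h12 : α₁ ≤ 2) (h2 : 0 < α₂) (h21 : α₂ < α₁)
    (hγ : 2 - 1 / α₁ - 2 / α₂ ≤ 0) :
    (∫⁻ y in Ici (2 : ℝ), ∫⁻ z in Icc (1 : ℝ) y, ∫⁻ x in Icc (1 : ℝ) y,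
        ENNReal.ofReal (1 / (x ^ α₁ + y ^ α₂ + z ^ α₂ * Real.log y ^ α₂) ^ 2)) = ⊤ :=
  stmt15_general α₁ α₂ h2 h21 hγ
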